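/- Let F be a convex class of probability distributions, T : F → ℝ a max-functional, and T' : F → A' ⊆ ℝ^m an elicitable functional such that there is no function f : A' → ℝ with T = f ∘ T'. Then T is not conditionally elicitable given T': there exists z ∈ A' such that the restriction of T to F_z = {F ∈ F : T'(F) = z} is not elicitable. -/

import Mathlib

/-! Level sets of an elicitable functional are closed under mixtures. Without a link function,
`T` takes two values `T G₀ < T G₁` on one level set; a mixture putting a small weight on `G₁`
already has the value `T G₁`, yet its expected score still favours `T G₀`, so `T` cannot be
elicited on that level set. -/

open MeasureTheory

/-- The mixture `l • μ + (1-l) • ν` of two measures. -/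
noncomputable def mix {O : Type*} [MeasurableSpace O] (μ ν : Measure O) (l : ℝ) : Measure O :=
  ENNReal.ofReal l • μ + ENNReal.ofReal (1 - l) • ν

/-- `S` is a strictly `𝓕`-consistent scoring function for the functional `T`. -/
def StrictlyConsistent {O A : Type*} [MeasurableSpace O]
    (𝓕 : Set (Measure O)) (T : Measure O → A) (S : A → O → ℝ) : Prop :=
  (∀ x, ∀ F ∈ 𝓕, Integrable (S x) F) ∧
  (∀ x, ∀ F ∈ 𝓕, ∫ y, S (T F) y ∂F ≤ ∫ y, S x y ∂F) ∧
  (∀ x, ∀ F ∈ 𝓕, ∫ y, S x y ∂F = ∫ y, S (T F) y ∂F → x = T F)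


/-- `T` is a max-functional on the class `𝓕`. -/
def MaxFunctional {O : Type*} [MeasurableSpace O]
    (𝓕 : Set (Measure O)) (T : Measure O → ℝ) : Prop :=
  ∀ F₀ ∈ 𝓕, ∀ F₁ ∈ 𝓕, ∀ l ∈ Set.Ioo (0:ℝ) 1, T (mix F₁ F₀ l) = max (T F₀) (T F₁)

theorem exists_forall_eq_comp_of_factorsThrough {α β γ : Type*} [Nonempty γ]
    (s : Set α) (f : α → β) (g : α → γ)
    (h : ∀ a ∈ s, ∀ b ∈ s, f a = f b → g a = g b) :
    ∃ k : β → γ, ∀ a ∈ s, g a = k (f a) := by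
  have hfac : (s.domRestrict g).FactorsThrough (s.domRestrict f) :=
    fun a b hab => h a a.2 b b.2 hab
  exact ⟨Function.extend (s.domRestrict f) (s.domRestrict g) fun _ => Classical.arbitrary γ,
    fun a ha => (hfac.extend_apply _ ⟨a, ha⟩).symm⟩

section Mixtures

variable {O : Type*} [MeasurableSpace O]

def MixtureClosed (𝓕 : Set (Measure O)) : Prop :=
  ∀ F ∈ 𝓕, ∀ G ∈ 𝓕, ∀ l ∈ Set.Ioo (0:ℝ) 1, mix F G l ∈ 𝓕

theorem integral_mix {μ ν : Measure O} {l : ℝ} (hl : l ∈ Set.Ioo (0:ℝ) 1) {f : O → ℝ}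
    (hμ : Integrable f μ) (hν : Integrable f ν) :
    ∫ y, f y ∂(mix μ ν l) = l * ∫ y, f y ∂μ + (1 - l) * ∫ y, f y ∂ν := by
  rw [mix, integral_add_measure (hμ.smul_measure ENNReal.ofReal_ne_top)
      (hν.smul_measure ENNReal.ofReal_ne_top), integral_smul_measure, integral_smul_measure,
    ENNReal.toReal_ofReal hl.1.le, ENNReal.toReal_ofReal (by linarith [hl.2]),
    smul_eq_mul, smul_eq_mul]

theorem StrictlyConsistent.integral_lt_of_ne {A : Type*} {𝓕 : Set (Measure O)}
    {T : Measure O → A} {S : A → O → ℝ} (hS : StrictlyConsistent 𝓕 T S)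
    {F : Measure O} (hF : F ∈ 𝓕) {x : A} (hx : x ≠ T F) :
    ∫ y, S (T F) y ∂F < ∫ y, S x y ∂F :=
  (hS.2.1 x F hF).lt_of_ne fun h => hx (hS.2.2 x F hF h.symm)

/-- `z` minimises the expected score under both components, hence under their mixture, and
strict consistency makes it the value of `T'` there. -/
theorem mixtureClosed_levelSet {A : Type*} {𝓕 : Set (Measure O)} (hconv : MixtureClosed 𝓕)
    {T' : Measure O → A} {S : A → O → ℝ} (hS : StrictlyConsistent 𝓕 T' S) (z : A) :
    MixtureClosed {F ∈ 𝓕 | T' F = z} := by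
  rintro G₁ ⟨hG₁, rfl⟩ G₀ ⟨hG₀, hz⟩ l hl
  obtain ⟨hint, hopt, hstrict⟩ := hS
  have hF := hconv G₁ hG₁ G₀ hG₀ l hl
  set F := mix G₁ G₀ l
  have hle : ∫ y, S (T' G₁) y ∂F ≤ ∫ y, S (T' F) y ∂F := by
    rw [integral_mix hl (hint _ _ hG₁) (hint _ _ hG₀),
      integral_mix hl (hint _ _ hG₁) (hint _ _ hG₀)]
    have h₁ := hopt (T' F) G₁ hG₁
    have h₀ := hopt (T' F) G₀ hG₀
    rw [hz] at h₀
    have : 0 < 1 - l := sub_pos.2 hl.2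
    gcongr
    exact hl.1.le
  exact ⟨hF, (hstrict _ F hF (le_antisymm hle (hopt _ F hF))).symm⟩

theorem MaxFunctional.mono {𝓕 𝓖 : Set (Measure O)} {T : Measure O → ℝ}
    (hmax : MaxFunctional 𝓕 T) (h𝓖 : 𝓖 ⊆ 𝓕) : MaxFunctional 𝓖 T :=
  fun F₀ hF₀ F₁ hF₁ => hmax F₀ (h𝓖 hF₀) F₁ (h𝓖 hF₁)

/-- The expected score gap in favour of `T G₀` is affine in the weight `l` of `G₁`, equal to
`δ > 0` at `l = 0`; it stays positive for `l = δ / (2 (c + δ))`, where `T` is already `T G₁`. -/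
theorem MaxFunctional.not_strictlyConsistent {𝓖 : Set (Measure O)} (hconv : MixtureClosed 𝓖)
    {T : Measure O → ℝ} (hmax : MaxFunctional 𝓖 T) {G₀ G₁ : Measure O}
    (hG₀ : G₀ ∈ 𝓖) (hG₁ : G₁ ∈ 𝓖) (hne : T G₀ ≠ T G₁) {S : ℝ → O → ℝ} :
    ¬ StrictlyConsistent 𝓖 T S := by
  wlog hlt : T G₀ < T G₁ generalizing G₀ G₁
  · exact this hG₁ hG₀ hne.symm (hne.lt_or_gt.resolve_left hlt)
  intro hS
  set δ := ∫ y, S (T G₁) y ∂G₀ - ∫ y, S (T G₀) y ∂G₀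
  set c := ∫ y, S (T G₀) y ∂G₁ - ∫ y, S (T G₁) y ∂G₁
  have hδ : 0 < δ := sub_pos.2 (hS.integral_lt_of_ne hG₀ hlt.ne')
  have hc : 0 ≤ c := sub_nonneg.2 (hS.2.1 _ G₁ hG₁)
  set l := δ / (2 * (c + δ))
  have hl_mul : l * (2 * (c + δ)) = δ := div_mul_cancel₀ δ (by positivity)
  have hl : l ∈ Set.Ioo (0:ℝ) 1 := ⟨by positivity, by rw [div_lt_one (by positivity)]; linarith⟩
  have hT : T (mix G₁ G₀ l) = T G₁ := by rw [hmax G₀ hG₀ G₁ hG₁ l hl, max_eq_right hlt.le]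
  have hopt := hS.2.1 (T G₀) _ (hconv G₁ hG₁ G₀ hG₀ l hl)
  rw [hT, integral_mix hl (hS.1 _ G₁ hG₁) (hS.1 _ G₀ hG₀),
    integral_mix hl (hS.1 _ G₁ hG₁) (hS.1 _ G₀ hG₀)] at hopt
  nlinarith

end Mixtures

theorem max_functional_not_conditionally_elicitable_general
    {O : Type*} [MeasurableSpace O]
    (𝓕 : Set (Measure O))
    (hconv : ∀ F ∈ 𝓕, ∀ G ∈ 𝓕, ∀ l ∈ Set.Ioo (0:ℝ) 1, mix F G l ∈ 𝓕)
    (T : Measure O → ℝ) (hmax : MaxFunctional 𝓕 T)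
    (m : ℕ) (T' : Measure O → (Fin m → ℝ))
    (helic : ∃ S : (Fin m → ℝ) → O → ℝ, StrictlyConsistent 𝓕 T' S)
    (hnolink : ¬ ∃ f : (Fin m → ℝ) → ℝ, ∀ F ∈ 𝓕, T F = f (T' F)) :
    ∃ z : Fin m → ℝ, ¬ ∃ S : ℝ → O → ℝ,
      StrictlyConsistent {F ∈ 𝓕 | T' F = z} T S := by
  obtain ⟨S', hS'⟩ := helic
  by_contra! hcond
  refine hnolink (exists_forall_eq_comp_of_factorsThrough 𝓕 T' T fun F hF G hG hFG => ?_)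
  by_contra hne
  obtain ⟨S, hS⟩ := hcond (T' G)
  exact MaxFunctional.not_strictlyConsistent (mixtureClosed_levelSet hconv hS' (T' G))
    (hmax.mono (Set.sep_subset _ _)) ⟨hF, hFG⟩ ⟨hG, rfl⟩ hne hS

/-- A max-functional that admits no link function through an elicitable `T'`
is not conditionally elicitable given `T'`: on some level set of `T'` the
restriction of `T` admits no strictly consistent scoring function. -/
theorem max_functional_not_conditionally_elicitable
    {O : Type*} [MeasurableSpace O]
    (𝓕 : Set (Measure O)) (hprob : ∀ F ∈ 𝓕, IsProbabilityMeasure F)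
    (hconv : ∀ F ∈ 𝓕, ∀ G ∈ 𝓕, ∀ l ∈ Set.Ioo (0:ℝ) 1, mix F G l ∈ 𝓕)
    (T : Measure O → ℝ) (hmax : MaxFunctional 𝓕 T)
    (m : ℕ) (T' : Measure O → (Fin m → ℝ))
    (helic : ∃ S : (Fin m → ℝ) → O → ℝ, StrictlyConsistent 𝓕 T' S)
    (hnolink : ¬ ∃ f : (Fin m → ℝ) → ℝ, ∀ F ∈ 𝓕, T F = f (T' F)) :
    ∃ z : Fin m → ℝ, ¬ ∃ S : ℝ → O → ℝ,
      StrictlyConsistent {F ∈ 𝓕 | T' F = z} T S :=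
  max_functional_not_conditionally_elicitable_general 𝓕 hconv T hmax m T' helic hnolink
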